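/- Let n₁, n₂, m₁, m₂ be positive integers with n₁ ≤ 2·n₂. Then H₂(n₁, m₁) + n₁ + n₂ ≤ G₂(n₁ + n₂, m₁ + m₂), where G₂(n, m) = n·(d₂ − 1 + c₂·log₂ m), H₂(n, m) = n·(d₂ + c₂·log₂(m − 1)) for m ≥ 2 and H₂(n, 1) = 0, with c₂ = 3/log₂(27/4) and d₂ = 6 − c₂·(3·log₂ 3 − 1). -/

import Mathlib

/-! Since `c₂·(3·log₂ 3 − 2) = 3`, we have `d₂ = 3 − c₂`, so `G₂(n, m) ≥ 2n` once `m ≥ 2`; this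
settles the case `m₁ = 1`. For `m₁ ≥ 2` the difference `G₂ − H₂ − n₁ − n₂` is linear in `n₁`, hence
it suffices to check it at `n₁ = 0` and at `n₁ = 2·n₂`. At the latter end point it reduces to
`(m₁ + m₂)³ ≥ (27/2)·(m₁ − 1)²`, which follows from `2(x + 2)³ − 27x² = (x − 4)²(2x + 1)`. -/

open Real

/-- The constant `c₂ = 3 / log₂(27/4)`. -/
noncomputable def c2 : ℝ := 3 / logb 2 (27 / 4)

/-- The constant `d₂ = 6 − c₂·(3·log₂ 3 − 1)`. -/
noncomputable def d2 : ℝ := 6 - c2 * (3 * logb 2 3 - 1)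

/-- `G₂(n, m) = n·(d₂ − 1 + c₂·log₂ m)`. -/
noncomputable def G2 (n m : ℕ) : ℝ := (n : ℝ) * (d2 - 1 + c2 * logb 2 m)

/-- `H₂(n, m) = n·(d₂ + c₂·log₂(m−1))` for `m ≥ 2`, and `H₂(n, 1) = 0`. -/
noncomputable def H2 (n m : ℕ) : ℝ :=
  if m = 1 then 0 else (n : ℝ) * (d2 + c2 * logb 2 ((m : ℝ) - 1))

lemma logb_two_twentySeven_div_four : logb 2 (27 / 4) = 3 * logb 2 3 - 2 := by
  rw [show (27 : ℝ) / 4 = 3 ^ 3 / 2 ^ 2 by norm_num, logb_div (by norm_num) (by norm_num),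
    logb_pow, logb_pow, logb_self_eq_one one_lt_two]
  ring

lemma one_le_logb_two_three : 1 ≤ logb 2 3 :=
  (le_logb_iff_rpow_le one_lt_two three_pos).2 (by norm_num)

lemma c2_mul_three_mul_logb_sub_two : c2 * (3 * logb 2 3 - 2) = 3 := by
  rw [c2, logb_two_twentySeven_div_four, div_mul_cancel₀]
  linarith [one_le_logb_two_three]

lemma c2_pos : 0 < c2 := by
  rw [c2, logb_two_twentySeven_div_four]
  exact div_pos three_pos (by linarith [one_le_logb_two_three])

lemma d2_eq : d2 = 3 - c2 := by
  rw [d2]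
  linear_combination -c2_mul_three_mul_logb_sub_two

lemma two_le_d2_sub_one_add_c2_mul_logb {x : ℝ} (hx : 2 ≤ x) : 2 ≤ d2 - 1 + c2 * logb 2 x := by
  have hlog : 1 ≤ logb 2 x := (le_logb_iff_rpow_le one_lt_two (by linarith)).2 (by simpa using hx)
  rw [d2_eq]
  nlinarith [c2_pos]

lemma cast_le_G2 (n : ℕ) {m : ℕ} (hm : 2 ≤ m) : (n : ℝ) ≤ G2 n m := by
  have hcoeff := two_le_d2_sub_one_add_c2_mul_logb (x := m) (by exact_mod_cast hm)
  rw [G2]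
  nlinarith [(n.cast_nonneg : (0 : ℝ) ≤ n)]

lemma twentySeven_mul_sq_le_two_mul_cube {x : ℝ} (hx : -1 / 2 ≤ x) :
    27 * x ^ 2 ≤ 2 * (x + 2) ^ 3 := by
  nlinarith [mul_nonneg (sq_nonneg (x - 4)) (by linarith : 0 ≤ 2 * x + 1)]

lemma three_mul_logb_two_three_add_two_mul_logb_le {a M : ℝ} (ha : 1 < a) (hM : a + 1 ≤ M) :
    3 * logb 2 3 + 2 * logb 2 (a - 1) ≤ 1 + 3 * logb 2 M := by
  have ha₀ : 0 < a - 1 := sub_pos.2 ha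
  have hM₀ : 0 < M := by linarith
  have hpoly : 27 * (a - 1) ^ 2 ≤ 2 * M ^ 3 :=
    calc 27 * (a - 1) ^ 2 ≤ 2 * (a - 1 + 2) ^ 3 := twentySeven_mul_sq_le_two_mul_cube (by linarith)
      _ ≤ 2 * M ^ 3 := by gcongr; linarith
  have hlog := logb_le_logb_of_le one_lt_two (by positivity) hpoly
  rwa [logb_mul (by norm_num) (by positivity), logb_mul (by norm_num) (by positivity),
    logb_pow, logb_pow, logb_self_eq_one one_lt_two,
    show (27 : ℝ) = 3 ^ 3 by norm_num, logb_pow] at hlog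

lemma mul_add_mul_nonneg_of_le_two_mul {A B x y : ℝ} (hA : 0 ≤ A) (hAB : 0 ≤ A + 2 * B)
    (hx : 0 ≤ x) (hxy : x ≤ 2 * y) : 0 ≤ y * A + x * B := by
  nlinarith [mul_nonneg (sub_nonneg.2 hxy) hA, mul_nonneg hx hAB]

lemma H2_add_le_G2_of_two_le {n₁ n₂ m₁ m₂ : ℕ} (h : n₁ ≤ 2 * n₂) (hm₁ : 2 ≤ m₁)
    (hm₂ : 1 ≤ m₂) : H2 n₁ m₁ + n₁ + n₂ ≤ G2 (n₁ + n₂) (m₁ + m₂) := by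
  set L := logb 2 ((m₁ + m₂ : ℕ) : ℝ)
  set ℓ := logb 2 ((m₁ : ℝ) - 1)
  have hA : 0 ≤ d2 - 2 + c2 * L := by
    linarith [two_le_d2_sub_one_add_c2_mul_logb (x := ((m₁ + m₂ : ℕ) : ℝ))
      (by exact_mod_cast (by omega : 2 ≤ m₁ + m₂))]
  have hAB : 0 ≤ (d2 - 2 + c2 * L) + 2 * (c2 * (L - ℓ) - 2) := by
    have hlog := three_mul_logb_two_three_add_two_mul_logb_le (a := m₁) (M := ((m₁ + m₂ : ℕ) : ℝ))
      (by exact_mod_cast hm₁) (by push_cast; exact_mod_cast (by omega : m₁ + 1 ≤ m₁ + m₂))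
    rw [d2_eq]
    linear_combination mul_nonneg c2_pos.le (sub_nonneg.2 hlog) - c2_mul_three_mul_logb_sub_two
  have key := mul_add_mul_nonneg_of_le_two_mul hA hAB (Nat.cast_nonneg n₁)
    (by exact_mod_cast h : (n₁ : ℝ) ≤ 2 * n₂)
  rw [H2, if_neg (by omega), G2, Nat.cast_add n₁ n₂]
  linear_combination key

theorem GH2_bound_b_general (n₁ n₂ m₁ m₂ : ℕ)
    (hm₁ : 0 < m₁) (hm₂ : 0 < m₂)
    (h : n₁ ≤ 2 * n₂) :
    H2 n₁ m₁ + n₁ + n₂ ≤ G2 (n₁ + n₂) (m₁ + m₂) := by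
  obtain rfl | hm₁ : m₁ = 1 ∨ 2 ≤ m₁ := by omega
  · rw [H2, if_pos rfl, zero_add]
    exact_mod_cast cast_le_G2 (n₁ + n₂) (by omega : 2 ≤ 1 + m₂)
  · exact H2_add_le_G2_of_two_le h hm₁ hm₂

/-- Lemma 11(b): if `n₁ ≤ 2·n₂` then
`H₂(n₁,m₁) + n₁ + n₂ ≤ G₂(n₁+n₂, m₁+m₂)`. -/
theorem GH2_bound_b (n₁ n₂ m₁ m₂ : ℕ)
    (hn₁ : 0 < n₁) (hn₂ : 0 < n₂) (hm₁ : 0 < m₁) (hm₂ : 0 < m₂)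
    (h : n₁ ≤ 2 * n₂) :
    H2 n₁ m₁ + n₁ + n₂ ≤ G2 (n₁ + n₂) (m₁ + m₂) :=
  GH2_bound_b_general n₁ n₂ m₁ m₂ hm₁ hm₂ h
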